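/- For every fixed integer N ≥ 1, the Erlang C delay probability ρ ↦ C(N, ρ) is strictly increasing on the interval (0, 1), where C(N, ρ) = [((Nρ)^N/N!)·(1/(1−ρ))] / [Σ_{k=0}^{N−1} (Nρ)^k/k! + ((Nρ)^N/N!)·(1/(1−ρ))]. -/

import Mathlib

/-- The Erlang C delay probability for an M/M/N queue with utilization ρ. -/
noncomputable def erlangC (N : ℕ) (ρ : ℝ) : ℝ :=
  ((N * ρ) ^ N / (Nat.factorial N) * (1 / (1 - ρ))) /
    ((Finset.range N).sum (fun k => (N * ρ) ^ k / (Nat.factorial k)) +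
      (N * ρ) ^ N / (Nat.factorial N) * (1 / (1 - ρ)))

/-- The auxiliary quantity D(ρ) = S(ρ)/B(ρ). -/
noncomputable def erlangD (N : ℕ) (ρ : ℝ) : ℝ :=
  (Finset.range N).sum (fun k =>
    (Nat.factorial N : ℝ) / (Nat.factorial k) * (1 - ρ) / ((N : ℝ) * ρ) ^ (N - k))

lemma erlangC_eq (N : ℕ) (hN : 1 ≤ N) (ρ : ℝ) (hρ : ρ ∈ Set.Ioo (0:ℝ) 1) :
    erlangC N ρ = 1 / (erlangD N ρ + 1) := by
  obtain ⟨h0, h1⟩ := hρ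
  have hNρ : (N : ℝ) * ρ ≠ 0 := by
    have : (0:ℝ) < (N : ℝ) * ρ := by positivity
    linarith
  have h1ρ : (1 : ℝ) - ρ ≠ 0 := by linarith
  set B : ℝ := (N * ρ) ^ N / (Nat.factorial N) * (1 / (1 - ρ)) with hB
  have hBpos : 0 < B := by
    have : (0:ℝ) < (N : ℝ) * ρ := by positivity
    have h2 : (0:ℝ) < 1 - ρ := by linarith
    positivity
  have hD : erlangD N ρ =
      (Finset.range N).sum (fun k => (N * ρ) ^ k / (Nat.factorial k)) / B := by
    rw [Finset.sum_div]
    apply Finset.sum_congr rfl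
    intro k hk
    have hk' : k < N := Finset.mem_range.mp hk
    have hpow : ((N : ℝ) * ρ) ^ N = ((N : ℝ) * ρ) ^ (N - k) * ((N : ℝ) * ρ) ^ k := by
      rw [← pow_add, Nat.sub_add_cancel hk'.le]
    have hfk : (Nat.factorial k : ℝ) ≠ 0 := Nat.cast_ne_zero.mpr (Nat.factorial_ne_zero k)
    have hfN : (Nat.factorial N : ℝ) ≠ 0 := Nat.cast_ne_zero.mpr (Nat.factorial_ne_zero N)
    have hp : ((N : ℝ) * ρ) ^ (N - k) ≠ 0 := pow_ne_zero _ hNρ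
    have hp2 : ((N : ℝ) * ρ) ^ k ≠ 0 := pow_ne_zero _ hNρ
    rw [hB, hpow]
    field_simp
  rw [erlangC, hD, ← hB]
  rw [div_add' _ _ _ hBpos.ne', one_div_div, one_mul]

lemma erlangD_anti (N : ℕ) (hN : 1 ≤ N) {x y : ℝ} (hx : x ∈ Set.Ioo (0:ℝ) 1)
    (hy : y ∈ Set.Ioo (0:ℝ) 1) (hxy : x < y) : erlangD N y < erlangD N x := by
  apply Finset.sum_lt_sum_of_nonempty
  · exact Finset.nonempty_range_iff.mpr (by omega)
  · intro k hk
    have hk' : k < N := Finset.mem_range.mp hk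
    obtain ⟨hx0, hx1⟩ := hx
    obtain ⟨hy0, hy1⟩ := hy
    have hc : (0:ℝ) < (Nat.factorial N : ℝ) / (Nat.factorial k) := by positivity
    have hm : 0 < N - k := by omega
    have hdiv : (1 - y) / ((N : ℝ) * y) ^ (N - k) < (1 - x) / ((N : ℝ) * x) ^ (N - k) := by
      apply div_lt_div₀ (by linarith)
      · apply pow_le_pow_left₀ (by positivity)
        have : (1:ℝ) ≤ (N : ℝ) := by exact_mod_cast hN
        nlinarith
      · linarith
      · positivity
    calc (Nat.factorial N : ℝ) / (Nat.factorial k) * (1 - y) / ((N : ℝ) * y) ^ (N - k)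
        = (Nat.factorial N : ℝ) / (Nat.factorial k) * ((1 - y) / ((N : ℝ) * y) ^ (N - k)) := by
          ring
      _ < (Nat.factorial N : ℝ) / (Nat.factorial k) * ((1 - x) / ((N : ℝ) * x) ^ (N - k)) :=
          mul_lt_mul_of_pos_left hdiv hc
      _ = (Nat.factorial N : ℝ) / (Nat.factorial k) * (1 - x) / ((N : ℝ) * x) ^ (N - k) := by
          ring

lemma erlangD_nonneg (N : ℕ) {ρ : ℝ} (hρ : ρ ∈ Set.Ioo (0:ℝ) 1) : 0 ≤ erlangD N ρ := by
  obtain ⟨h0, h1⟩ := hρ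
  apply Finset.sum_nonneg
  intro k hk
  have : (0:ℝ) ≤ 1 - ρ := by linarith
  positivity

/-- For every fixed N ≥ 1, the Erlang C delay probability
ρ ↦ C(N, ρ) is strictly increasing on (0, 1). -/
theorem erlangC_strictMonoOn
    (N : ℕ) (hN : 1 ≤ N) :
    StrictMonoOn (erlangC N) (Set.Ioo (0 : ℝ) 1) := by
  intro x hx y hy hxy
  rw [erlangC_eq N hN x hx, erlangC_eq N hN y hy]
  have hDy : 0 ≤ erlangD N y := erlangD_nonneg N hy
  have hlt : erlangD N y < erlangD N x := erlangD_anti N hN hx hy hxy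
  apply one_div_lt_one_div_of_lt (by linarith) (by linarith)
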